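/- arXiv:1901.10848 — 4 statements merged into one kernel-verified Lean document; each statement's English description precedes it below -/
import Mathlib

section
/- The linear subspace Sep_ℓ = {λ_α : α ∈ ℝ^ℓ} has dimension exactly ℓ when ℓ ≤ m, i.e., the functions p ↦ C(p-1, i-1)·C(m-p, ℓ-i) for i = 1, ..., ℓ are linearly independent as functions on {1, ..., m}. -/
/-- The functions `p ↦ C(p-1, i-1)·C(m-p, ℓ-i)` for `i = 1, …, ℓ` are linearly independent
as real-valued functions on positions `{1, …, m}` (here `p : Fin m` encodes position `p+1`,
`i : Fin ℓ` encodes rank `i+1`); hence `Sep_ℓ` has dimension exactly `ℓ` when `ℓ ≤ m`. -/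
theorem stmt_5 (m ℓ : ℕ) (hℓ : ℓ ≤ m) :
    LinearIndependent ℝ
      (fun i : Fin ℓ => fun p : Fin m =>
        ((Nat.choose p.val i.val * Nat.choose (m - 1 - p.val) (ℓ - 1 - i.val) : ℕ) : ℝ)) := by
  rw [Fintype.linearIndependent_iff]
  intro g hg
  have key : ∀ n : ℕ, ∀ i : Fin ℓ, i.val = n → g i = 0 := by
    intro n
    induction n using Nat.strong_induction_on with
    | _ n ih =>
      intro i hi
      have him : i.val < m := lt_of_lt_of_le i.isLt hℓ
      have h := congrFun hg ⟨i.val, him⟩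
      simp only [Finset.sum_apply, Pi.smul_apply, smul_eq_mul, Pi.zero_apply] at h
      rw [Finset.sum_eq_single i] at h
      · have hpos : 0 < Nat.choose (m - 1 - i.val) (ℓ - 1 - i.val) := by
          apply Nat.choose_pos
          omega
        have : (0:ℝ) < ((Nat.choose i.val i.val * Nat.choose (m - 1 - i.val) (ℓ - 1 - i.val) : ℕ) : ℝ) := by
          have : 0 < Nat.choose i.val i.val * Nat.choose (m - 1 - i.val) (ℓ - 1 - i.val) := by
            simp [Nat.choose_self, hpos]
          exact_mod_cast this
        exact (mul_eq_zero.mp h).resolve_right (ne_of_gt this)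
      · intro j _ hji
        rcases lt_or_gt_of_ne (fun h' : j.val = i.val => hji (Fin.ext h')) with hlt | hgt
        · rw [ih j.val (hi ▸ hlt) j rfl]; ring
        · rw [Nat.choose_eq_zero_of_lt hgt]
          simp
      · intro habs
        exact absurd (Finset.mem_univ i) habs
  intro i
  exact key i.val i rfl
end

section
/- For a nonincreasing scoring vector α₁ ≥ α₂ ≥ ... ≥ α_m ≥ 0 with α₁ > 0, any algorithm for ℓ-truncated elections that outputs the candidate maximizing the guaranteed worst-case score achieves approximation ratio at least (∑_{i=1}^{ℓ} α_i) / (m·α_{ℓ+1} + ((α₁ - α_{ℓ+1})/α₁)·∑_{i=1}^{ℓ} α_i) for the corresponding positional scoring rule. -/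
/-- Truncated-ballot guarantee for positional scoring rules.  A full profile assigns to
each voter `v` a ranking `rk v : Fin m ≃ Fin m`, the position of candidate `c` being
`(rk v c) + 1`.  Two profiles agree on their `ℓ`-truncations when they coincide on any
candidate ranked in the top `ℓ` by either.  If `worst c` is the score of `c` computed
from the `ℓ`-truncation of `rk`, ranking `c` last whenever it is unranked, and `a`
maximizes `worst`, then in every completion `rk'` of the truncated profile the score of
`a` is at least
`(∑_{i=1}^{ℓ} α_i) / (m·α_{ℓ+1} + ((α₁ - α_{ℓ+1})/α₁)·∑_{i=1}^{ℓ} α_i)`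
times the score of any candidate `w` (in particular of the true winner). -/
theorem stmt_9 (n m ℓ : ℕ) (hn : 0 < n) (hℓ : 1 ≤ ℓ) (hℓm : ℓ < m)
    (α : ℕ → ℝ) (hmono : ∀ i j, 1 ≤ i → i ≤ j → j ≤ m → α j ≤ α i)
    (hnonneg : ∀ i, 1 ≤ i → i ≤ m → 0 ≤ α i) (hpos : 0 < α 1)
    (rk rk' : Fin n → (Fin m ≃ Fin m))
    (hagree : ∀ v c, ((rk v c : ℕ) + 1 ≤ ℓ ∨ (rk' v c : ℕ) + 1 ≤ ℓ) → rk v c = rk' v c)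
    (worst : Fin m → ℝ)
    (hworst : ∀ c, worst c =
      ∑ v : Fin n, if (rk v c : ℕ) + 1 ≤ ℓ then α ((rk v c : ℕ) + 1) else α m)
    (a : Fin m) (ha : ∀ c, worst c ≤ worst a) :
    ∀ w : Fin m,
      ((∑ i ∈ Finset.Icc 1 ℓ, α i) /
          ((m : ℝ) * α (ℓ + 1) + ((α 1 - α (ℓ + 1)) / α 1) * ∑ i ∈ Finset.Icc 1 ℓ, α i))
        * (∑ v : Fin n, α ((rk' v w : ℕ) + 1))
      ≤ ∑ v : Fin n, α ((rk' v a : ℕ) + 1) := by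
  intro w
  set S := ∑ i ∈ Finset.Icc 1 ℓ, α i with hSdef
  set β := α (ℓ + 1) with hβdef
  have hm1 : 1 ≤ m := by omega
  have hβ0 : 0 ≤ β := hnonneg (ℓ + 1) (by omega) hℓm
  have hβα : β ≤ α 1 := hmono 1 (ℓ + 1) le_rfl (by omega) hℓm
  have hαm0 : 0 ≤ α m := hnonneg m hm1 le_rfl
  have hSge : α 1 ≤ S := by
    apply Finset.single_le_sum (f := α) ?_ (Finset.mem_Icc.mpr ⟨le_rfl, hℓ⟩)
    intro i hi
    obtain ⟨h1, h2⟩ := Finset.mem_Icc.mp hi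
    exact hnonneg i h1 (le_trans h2 (le_of_lt hℓm))
  have hS0 : 0 < S := lt_of_lt_of_le hpos hSge
  set D := (m : ℝ) * β + ((α 1 - β) / α 1) * S with hDdef
  have hcoef : 0 ≤ (α 1 - β) / α 1 := div_nonneg (by linarith) hpos.le
  have hD : 0 < D := by
    have h1 : (α 1 - β) / α 1 * α 1 ≤ (α 1 - β) / α 1 * S :=
      mul_le_mul_of_nonneg_left hSge hcoef
    have h2 : (α 1 - β) / α 1 * α 1 = α 1 - β := div_mul_cancel₀ _ (ne_of_gt hpos)
    have h3 : β ≤ (m : ℝ) * β := le_mul_of_one_le_left hβ0 (by exact_mod_cast hm1)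
    rw [hDdef]; nlinarith
  -- the true score of `a` is at least `worst a`
  have hWa : worst a ≤ ∑ v : Fin n, α ((rk' v a : ℕ) + 1) := by
    rw [hworst]
    apply Finset.sum_le_sum
    intro v _
    by_cases h : (rk v a : ℕ) + 1 ≤ ℓ
    · rw [if_pos h, hagree v a (Or.inl h)]
    · rw [if_neg h]
      exact hmono ((rk' v a : ℕ) + 1) m (by omega) (by have := (rk' v a).isLt; omega) le_rfl
  -- each voter contributes at least `S` to the total truncated score
  have hSrange : S = ∑ j ∈ Finset.range ℓ, α (j + 1) := by
    rw [hSdef, ← Finset.Ico_add_one_right_eq_Icc, Finset.sum_Ico_eq_sum_range]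
    exact Finset.sum_congr (by norm_num) fun i _ => by rw [add_comm]
  have hvoter : ∀ v : Fin n,
      S ≤ ∑ c : Fin m, (if (rk v c : ℕ) + 1 ≤ ℓ then α ((rk v c : ℕ) + 1) else α m) := by
    intro v
    have hre : ∑ c : Fin m, (if (rk v c : ℕ) + 1 ≤ ℓ then α ((rk v c : ℕ) + 1) else α m)
        = ∑ p : Fin m, (if (p : ℕ) + 1 ≤ ℓ then α ((p : ℕ) + 1) else α m) :=
      Equiv.sum_comp (rk v) (fun p => if (p : ℕ) + 1 ≤ ℓ then α ((p : ℕ) + 1) else α m)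
    rw [hre, Fin.sum_univ_eq_sum_range (fun j => if j + 1 ≤ ℓ then α (j + 1) else α m) m]
    have hsub : Finset.range ℓ ⊆ Finset.range m := Finset.range_subset_range.mpr (le_of_lt hℓm)
    have h1 : ∑ j ∈ Finset.range ℓ, (if j + 1 ≤ ℓ then α (j + 1) else α m)
        ≤ ∑ j ∈ Finset.range m, (if j + 1 ≤ ℓ then α (j + 1) else α m) := by
      apply Finset.sum_le_sum_of_subset_of_nonneg hsub
      intro j hj _
      split_ifs with h
      · exact hnonneg (j + 1) (by omega) (by omega)
      · exact hαm0
    have h2 : ∑ j ∈ Finset.range ℓ, (if j + 1 ≤ ℓ then α (j + 1) else α m)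
        = ∑ j ∈ Finset.range ℓ, α (j + 1) := by
      apply Finset.sum_congr rfl
      intro j hj
      rw [if_pos (by simpa using Finset.mem_range.mp hj)]
    rw [hSrange, ← h2]; exact h1
  -- `m * worst a ≥ n * S`
  have hmW : (n : ℝ) * S ≤ (m : ℝ) * worst a := by
    have h1 : ∑ c : Fin m, worst c ≤ ∑ _c : Fin m, worst a :=
      Finset.sum_le_sum fun c _ => ha c
    have h2 : (n : ℝ) * S ≤ ∑ c : Fin m, worst c := by
      have hsw : ∑ c : Fin m, worst c = ∑ v : Fin n, ∑ c : Fin m,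
          (if (rk v c : ℕ) + 1 ≤ ℓ then α ((rk v c : ℕ) + 1) else α m) := by
        simp_rw [hworst]; rw [Finset.sum_comm]
      rw [hsw]
      calc (n : ℝ) * S = ∑ _v : Fin n, S := by
            rw [Finset.sum_const, Finset.card_univ, Fintype.card_fin, nsmul_eq_mul]
        _ ≤ _ := Finset.sum_le_sum fun v _ => hvoter v
    have h3 : ∑ _c : Fin m, worst a = (m : ℝ) * worst a := by
      rw [Finset.sum_const, Finset.card_univ, Fintype.card_fin, nsmul_eq_mul]
    linarith
  -- bound the true score of `w`
  set T := ∑ v : Fin n, (if (rk v w : ℕ) + 1 ≤ ℓ then α ((rk v w : ℕ) + 1) else 0) with hTdef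
  have hTw : T ≤ worst w := by
    rw [hworst, hTdef]
    apply Finset.sum_le_sum
    intro v _
    split_ifs with h
    · exact le_rfl
    · exact hαm0
  have hT0 : 0 ≤ T := by
    apply Finset.sum_nonneg
    intro v _
    split_ifs with h
    · exact hnonneg _ (by omega) (by omega)
    · exact le_rfl
  have hscorew : ∑ v : Fin n, α ((rk' v w : ℕ) + 1)
      ≤ T * (1 - β / α 1) + (n : ℝ) * β := by
    have hsum : ∑ v : Fin n, α ((rk' v w : ℕ) + 1)
        ≤ ∑ v : Fin n, ((if (rk v w : ℕ) + 1 ≤ ℓ then α ((rk v w : ℕ) + 1) else 0)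
            * (1 - β / α 1) + β) := by
      apply Finset.sum_le_sum
      intro v _
      by_cases h : (rk v w : ℕ) + 1 ≤ ℓ
      · rw [if_pos h, ← hagree v w (Or.inl h), mul_sub, mul_one]
        have hp1 : α ((rk v w : ℕ) + 1) ≤ α 1 := hmono 1 _ le_rfl (by omega) (by omega)
        have hp0 : 0 ≤ α ((rk v w : ℕ) + 1) := hnonneg _ (by omega) (by omega)
        have key : α ((rk v w : ℕ) + 1) * (β / α 1) ≤ β := by
          rw [mul_comm, div_mul_eq_mul_div, div_le_iff₀ hpos]
          nlinarith
        linarith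
      · rw [if_neg h, zero_mul, zero_add]
        have h' : ¬ ((rk' v w : ℕ) + 1 ≤ ℓ) := by
          intro hc
          exact h (hagree v w (Or.inr hc) ▸ hc)
        exact hmono (ℓ + 1) ((rk' v w : ℕ) + 1) (by omega) (by omega)
          (by have := (rk' v w).isLt; omega)
    calc ∑ v : Fin n, α ((rk' v w : ℕ) + 1) ≤ _ := hsum
      _ = T * (1 - β / α 1) + (n : ℝ) * β := by
          rw [Finset.sum_add_distrib, ← Finset.sum_mul, Finset.sum_const,
            Finset.card_univ, Fintype.card_fin, nsmul_eq_mul, ← hTdef]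
  -- put everything together
  have hdiv : (1 : ℝ) - β / α 1 = (α 1 - β) / α 1 := by field_simp
  have hWw : worst w ≤ worst a := ha w
  have hTW : T ≤ worst a := le_trans hTw hWw
  have hW0 : 0 ≤ worst a := le_trans hT0 hTW
  rw [div_mul_eq_mul_div, div_le_iff₀ hD]
  have hsw2 : ∑ v : Fin n, α ((rk' v w : ℕ) + 1)
      ≤ worst a * ((α 1 - β) / α 1) + (n : ℝ) * β := by
    have : T * (1 - β / α 1) ≤ worst a * (1 - β / α 1) := by
      apply mul_le_mul_of_nonneg_right hTW
      rw [hdiv]; exact hcoef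
    rw [← hdiv]; linarith
  have hstep : S * (∑ v : Fin n, α ((rk' v w : ℕ) + 1))
      ≤ S * (worst a * ((α 1 - β) / α 1) + (n : ℝ) * β) :=
    mul_le_mul_of_nonneg_left hsw2 hS0.le
  have hstep2 : S * (worst a * ((α 1 - β) / α 1) + (n : ℝ) * β) ≤ worst a * D := by
    have hnsβ : (n : ℝ) * S * β ≤ (m : ℝ) * worst a * β :=
      mul_le_mul_of_nonneg_right hmW hβ0
    rw [hDdef]; ring_nf; ring_nf at hnsβ; nlinarith
  have hfin : worst a * D ≤ (∑ v : Fin n, α ((rk' v a : ℕ) + 1)) * D :=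
    mul_le_mul_of_nonneg_right hWa hD.le
  exact hstep.trans (hstep2.trans hfin)
end

section
/- No deterministic rule on ℓ-truncated elections can guarantee approximation ratio better than 1/(m-ℓ) for the Minimax rule: there is an ℓ-truncated profile with m voters and m candidates, symmetric under cyclic rotation of candidates, such that for any candidate chosen as winner there exists a completion in which that candidate's Minimax score is 1 while some other candidate's Minimax score is m - ℓ. -/
/-!
The profile is invariant under rotation, so any winner `w` can be punished by the same
completion shifted to `w`: every voter appends her unranked candidates in the cyclic order
`a, a + 1, …` with `a = w - 1`. Then `w` beats `a` only on the ballot of voter `w` (every other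
voter who ranks `w` ranks `a` right before it, and every voter who leaves `w` unranked either
ranks `a` or lists it first among her unranked candidates), so `w` has Minimax score `1`.
On the other hand `a` beats any candidate `c` on each of the `m - ℓ` ballots leaving `c`
unranked, and for `c = a + ℓ` only there, so `a` has Minimax score `m - ℓ`.
-/

open Finset Function

theorem Fintype.exists_equiv_fin_lt_iff {α β : Type*} [Fintype α] [LinearOrder β] {f : α → β}
    (hf : Injective f) {n : ℕ} (hn : Fintype.card α = n) :
    ∃ e : α ≃ Fin n, ∀ x y, e x < e y ↔ f x < f y :=
  let _ : LinearOrder α := LinearOrder.lift' f hf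
  ⟨(Fintype.orderIsoFinOfCardEq α hn).symm.toEquiv,
    fun _ _ => (Fintype.orderIsoFinOfCardEq α hn).symm.lt_iff_lt⟩

theorem Equiv.val_eq_card_filter_lt {α β : Type*} [Fintype α] [LinearOrder β] {f : α → β}
    {n : ℕ} (e : α ≃ Fin n) (he : ∀ x y, e x < e y ↔ f x < f y) (x : α) :
    (e x : ℕ) = #{y | f y < f x} := by
  have : #{y | f y < f x} = #{i : Fin n | i < e x} := by
    simp_rw [← he]
    exact card_equiv e (by simp)
  rw [this, filter_gt_eq_Iio, Fin.card_Iio]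

theorem Fin.card_filter_val_perm_lt {n : ℕ} (e : Equiv.Perm (Fin n)) (t : ℕ) :
    #{x | (e x : ℕ) < t} = min n t := by
  rw [← Fin.card_filter_val_lt]
  exact card_equiv e (by simp)

namespace CyclicTruncation

variable {m : ℕ} [NeZero m] (ℓ : ℕ) (a : Fin m)

/-- Sorting key of the completion in which voter `v` ranks `v, …, v + ℓ - 1` first and appends
the remaining candidates in the cyclic order `a, a + 1, …`. -/
def key (v c : Fin m) : ℕ :=
  if ((c - v : Fin m) : ℕ) < ℓ then (c - v : Fin m) else ℓ + (c - a : Fin m)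

theorem key_injective (v : Fin m) : Injective (key ℓ a v) := by
  intro x y hxy
  unfold key at hxy
  split_ifs at hxy
  · exact sub_left_inj.mp (Fin.ext hxy)
  · omega
  · omega
  · exact sub_left_inj.mp (Fin.ext (show ((x - a : Fin m) : ℕ) = (y - a : Fin m) by omega))

theorem card_filter_sub_lt (v : Fin m) (t : ℕ) : #{c | ((c - v : Fin m) : ℕ) < t} = min m t :=
  Fin.card_filter_val_perm_lt (Equiv.subRight v) t

theorem card_filter_not_sub_lt (c : Fin m) {t : ℕ} (ht : t ≤ m) :
    #{v | ¬((c - v : Fin m) : ℕ) < t} = m - t := by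
  have h := Fin.card_filter_val_perm_lt (Equiv.subLeft c) t
  simp only [Equiv.subLeft_apply] at h
  rw [filter_not, card_sdiff_of_subset (filter_subset _ _), card_univ, Fintype.card_fin, h,
    min_eq_right ht]

theorem card_filter_key_lt_key_add (v j : Fin m) (hj : (j : ℕ) < ℓ) :
    #{c | key ℓ a v c < key ℓ a v (v + j)} = j := by
  have hkey : ∀ c, key ℓ a v c < j ↔ ((c - v : Fin m) : ℕ) < j := by
    intro c
    unfold key
    split_ifs <;> omega
  have hvj : key ℓ a v (v + j) = j := by rw [key, add_sub_cancel_left, if_pos hj]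
  simp only [hvj, hkey, card_filter_sub_lt, min_eq_right j.isLt.le]

theorem key_self_lt_key {ℓ : ℕ} (hℓ : 0 < ℓ) {v c : Fin m} (hc : c ≠ v) :
    key ℓ a v v < key ℓ a v c := by
  have hv : key ℓ a v v = 0 := by rw [key, sub_self, Fin.val_zero, if_pos hℓ]
  have := (key_injective ℓ a v).ne hc
  omega

theorem key_lt_key_of_not_lt {c v : Fin m} (hc : c ≠ a) (hv : ¬((c - v : Fin m) : ℕ) < ℓ) :
    key ℓ a v a < key ℓ a v c := by
  have : ((c - a : Fin m) : ℕ) ≠ 0 := by simpa [Fin.val_eq_zero_iff, sub_eq_zero] using hc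
  rw [key, key, if_neg hv, sub_self]
  simp only [Fin.val_zero]
  split_ifs <;> omega

theorem key_lt_key_sub_one_iff {ℓ : ℕ} (hℓ : 0 < ℓ) (hℓm : ℓ < m) (w v : Fin m) :
    key ℓ (w - 1) v w < key ℓ (w - 1) v (w - 1) ↔ v = w := by
  obtain ⟨n, rfl⟩ : ∃ n, m = n + 1 := ⟨m - 1, by omega⟩
  have h1 : ((1 : Fin (n + 1)) : ℕ) = 1 := by rw [Fin.val_one', Nat.mod_eq_of_lt (by omega)]
  rw [key, key, sub_sub_cancel, sub_self, sub_right_comm, Fin.coe_sub_one, h1, eq_comm (a := v),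
    ← sub_eq_zero (a := w)]
  simp only [Fin.val_zero, ← Fin.val_eq_zero_iff]
  split_ifs <;> omega

theorem key_lt_key_add_iff {ℓ : ℕ} (hℓ : 0 < ℓ) (hℓm : ℓ < m) (v : Fin m) :
    key ℓ a v a < key ℓ a v (a + ⟨ℓ, hℓm⟩) ↔ ¬((a + ⟨ℓ, hℓm⟩ - v : Fin m) : ℕ) < ℓ := by
  rw [key, key, sub_self, add_sub_cancel_left, add_sub_right_comm, Fin.val_add_eq_ite]
  simp only [Fin.val_zero]
  split_ifs <;> omega

end CyclicTruncation

open CyclicTruncation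

/-- Lower bound for Minimax on `ℓ`-truncated elections.  Candidates and voters are both
`Fin m`; in the cyclic truncated profile voter `v` ranks `v, v+1, …, v+ℓ-1` (indices mod
`m`) as her top `ℓ`.  A completion is a full profile `rk` (voter `v` places candidate `c`
at position `rk v c`, 0-indexed) consistent with this truncated profile.  For every
candidate `w` chosen as winner there is a completion in which the Minimax score of `w`
(the minimum over `c' ≠ w` of the number of voters preferring `w` to `c'`) equals `1`,
while some other candidate has Minimax score `m - ℓ`; hence no deterministic rule on
`ℓ`-truncated elections is better than a `1/(m-ℓ)`-approximation of Minimax. -/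
theorem stmt_14 (m ℓ : ℕ) (hℓ : 1 ≤ ℓ) (hℓm : ℓ < m) :
    ∀ w : Fin m, ∃ rk : Fin m → (Fin m ≃ Fin m),
      -- consistency with the cyclic ℓ-truncated profile
      (∀ v j : Fin m, (j : ℕ) < ℓ → rk v (v + j) = j) ∧
      -- the Minimax score of the chosen winner w equals 1
      (∀ c' : Fin m, c' ≠ w →
        1 ≤ (Finset.univ.filter (fun v : Fin m => rk v w < rk v c')).card) ∧
      (∃ c' : Fin m, c' ≠ w ∧
        (Finset.univ.filter (fun v : Fin m => rk v w < rk v c')).card = 1) ∧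
      -- some other candidate has Minimax score m - ℓ
      (∃ c : Fin m, c ≠ w ∧
        (∀ c' : Fin m, c' ≠ c →
          m - ℓ ≤ (Finset.univ.filter (fun v : Fin m => rk v c < rk v c')).card) ∧
        (∃ c' : Fin m, c' ≠ c ∧
          (Finset.univ.filter (fun v : Fin m => rk v c < rk v c')).card = m - ℓ)) := by
  intro w
  have : NeZero m := ⟨by omega⟩
  choose rk hrk using fun v =>
    Fintype.exists_equiv_fin_lt_iff (key_injective ℓ (w - 1) v) (Fintype.card_fin m)
  have hscore : ∀ c c',
      #{v | rk v c < rk v c'} = #{v | key ℓ (w - 1) v c < key ℓ (w - 1) v c'} :=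
    fun c c' => by simp only [hrk]
  have hpred : w - 1 ≠ w := fun h => by
    simpa [Fin.ext_iff, Fin.val_one', Nat.mod_eq_of_lt (show 1 < m by omega)] using
      sub_eq_self.mp h
  refine ⟨rk, fun v j hj => ?_, fun c' hc' => ?_, ⟨w - 1, hpred, ?_⟩,
    w - 1, hpred, fun c' hc' => ?_, w - 1 + ⟨ℓ, hℓm⟩, ?_, ?_⟩
  · exact Fin.ext <| ((rk v).val_eq_card_filter_lt (hrk v) _).trans
      (card_filter_key_lt_key_add ℓ (w - 1) v j hj)
  · rw [hscore]
    exact card_pos.mpr ⟨w, mem_filter.mpr ⟨mem_univ w, key_self_lt_key (w - 1) hℓ hc'⟩⟩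
  · rw [hscore, filter_congr fun v _ => key_lt_key_sub_one_iff hℓ hℓm w v, filter_eq',
      if_pos (mem_univ w), card_singleton]
  · rw [hscore]
    calc m - ℓ = #{v | ¬((c' - v : Fin m) : ℕ) < ℓ} := (card_filter_not_sub_lt c' hℓm.le).symm
      _ ≤ _ := card_le_card fun v hv => mem_filter.mpr
          ⟨mem_univ v, key_lt_key_of_not_lt ℓ (w - 1) hc' (mem_filter.mp hv).2⟩
  · exact fun h => (Nat.one_le_iff_ne_zero.mp hℓ) (Fin.val_eq_of_eq (add_eq_left.mp h))
  · rw [hscore, filter_congr fun v _ => key_lt_key_add_iff (w - 1) hℓ hℓm v,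
      card_filter_not_sub_lt _ hℓm.le]
end

section
/- If in an ℓ-truncated election (1 ≤ ℓ < m, n voters, m candidates) every candidate has worst Minimax score at most x, then every candidate has best Minimax score at most x·(m-ℓ)·(1 + ℓ²/(m² - ℓ² - m + ℓ)); consequently choosing the candidate with the maximum worst Minimax score approximates the Minimax winner's score within a factor of 1/((m-ℓ)·(1 + ℓ²/(m²-ℓ²-m+ℓ))) ≥ 1/(m - ℓ/2). -/
open Finset

namespace Stmt18Aux

variable {n m ℓ : ℕ}

/-- `N top a b` = number of voters truncated-preferring `a` to `b`. -/
def N (top : Fin n → Fin ℓ → Fin m) (a b : Fin m) : ℕ :=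
  (Finset.univ.filter (fun v : Fin n =>
    ∃ i, top v i = a ∧ ∀ i', top v i' = b → i < i')).card

/-- number of voters not ranking `c` at all. -/
def occ' (top : Fin n → Fin ℓ → Fin m) (c : Fin m) : ℕ :=
  (Finset.univ.filter (fun v : Fin n => ¬ ∃ i, top v i = c)).card

lemma sumA (top : Fin n → Fin ℓ → Fin m) (hinj : ∀ v, Function.Injective (top v))
    (c : Fin m) :
    ℓ * occ' top c ≤ ∑ c' ∈ univ.erase c, N top c' c := by
  have key : ∑ c' ∈ univ.erase c, N top c' c
      = ∑ v : Fin n, ((univ.erase c).filter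
        (fun c' => ∃ i, top v i = c' ∧ ∀ i', top v i' = c → i < i')).card := by
    simp_rw [N, Finset.card_filter]
    exact Finset.sum_comm
  rw [key]
  have hstep : ∀ v ∈ univ.filter (fun v : Fin n => ¬ ∃ i, top v i = c),
      ℓ ≤ ((univ.erase c).filter
        (fun c' => ∃ i, top v i = c' ∧ ∀ i', top v i' = c → i < i')).card := by
    intro v hv
    rw [mem_filter] at hv
    have himg : (univ : Finset (Fin ℓ)).image (top v) ⊆
        (univ.erase c).filter
          (fun c' => ∃ i, top v i = c' ∧ ∀ i', top v i' = c → i < i') := by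
      intro c' hc'
      rw [mem_image] at hc'
      obtain ⟨j, -, hj⟩ := hc'
      refine mem_filter.mpr ⟨mem_erase.mpr ⟨?_, mem_univ _⟩, j, hj, ?_⟩
      · rintro rfl; exact hv.2 ⟨j, hj⟩
      · intro i' hi'; exact absurd ⟨i', hi'⟩ hv.2
    calc ℓ = ((univ : Finset (Fin ℓ)).image (top v)).card := by
          rw [Finset.card_image_of_injective _ (hinj v), card_univ, Fintype.card_fin]
      _ ≤ _ := Finset.card_le_card himg
  calc ℓ * occ' top c
      = ∑ _v ∈ univ.filter (fun v : Fin n => ¬ ∃ i, top v i = c), ℓ := by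
        rw [Finset.sum_const, occ', smul_eq_mul, mul_comm]
    _ ≤ ∑ v ∈ univ.filter (fun v : Fin n => ¬ ∃ i, top v i = c),
          ((univ.erase c).filter
            (fun c' => ∃ i, top v i = c' ∧ ∀ i', top v i' = c → i < i')).card :=
        Finset.sum_le_sum hstep
    _ ≤ _ := Finset.sum_le_sum_of_subset (filter_subset _ _)

lemma split (top : Fin n → Fin ℓ → Fin m) (hinj : ∀ v, Function.Injective (top v))
    {c d : Fin m} (hdc : d ≠ c) :
    n ≤ N top c d + N top d c + occ' top c := by
  have hsub : (univ.filter (fun v : Fin n => ∃ i, top v i = c)) ⊆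
      (univ.filter (fun v : Fin n => ∃ i, top v i = c ∧ ∀ i', top v i' = d → i < i'))
      ∪ (univ.filter (fun v : Fin n => ∃ i, top v i = d ∧ ∀ i', top v i' = c → i < i')) := by
    intro v hv
    obtain ⟨i, hi⟩ := (mem_filter.mp hv).2
    by_cases h : ∀ i', top v i' = d → i < i'
    · exact mem_union_left _ (mem_filter.mpr ⟨mem_univ _, i, hi, h⟩)
    · push_neg at h
      obtain ⟨j, hj, hji⟩ := h
      refine mem_union_right _ (mem_filter.mpr ⟨mem_univ _, j, hj, ?_⟩)
      intro i' hi'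
      have hii : i' = i := hinj v (hi'.trans hi.symm)
      subst hii
      exact lt_of_le_of_ne hji (fun h' => hdc (by rw [← hj, h', hi']))
  have hcard : (univ.filter (fun v : Fin n => ∃ i, top v i = c)).card
      ≤ N top c d + N top d c := by
    refine (Finset.card_le_card hsub).trans ?_
    exact (Finset.card_union_le _ _)
  have hpart : (univ.filter (fun v : Fin n => ∃ i, top v i = c)).card + occ' top c = n := by
    rw [occ', Finset.card_filter_add_card_filter_not, card_univ, Fintype.card_fin]
  omega

lemma firstlemma (top : Fin n → Fin ℓ → Fin m) (hℓ : 1 ≤ ℓ) (hm : 0 < m) :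
    ∃ c : Fin m, ∀ d : Fin m, d ≠ c → n ≤ m * N top c d := by
  have : Nonempty (Fin m) := ⟨⟨0, hm⟩⟩
  set z : Fin ℓ := ⟨0, hℓ⟩ with hz
  have hsum : (univ : Finset (Fin n)).card
      = ∑ c : Fin m, (univ.filter (fun v : Fin n => top v z = c)).card :=
    Finset.card_eq_sum_card_fiberwise (fun v _ => mem_univ _)
  have hle : ∑ _c : Fin m, n ≤ ∑ c : Fin m, m * (univ.filter (fun v : Fin n => top v z = c)).card := by
    rw [← Finset.mul_sum, ← hsum, card_univ, Fintype.card_fin, Finset.sum_const,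
      card_univ, Fintype.card_fin, smul_eq_mul]
  obtain ⟨c, -, hc⟩ := Finset.exists_le_of_sum_le Finset.univ_nonempty hle
  refine ⟨c, fun d hd => ?_⟩
  refine hc.trans (Nat.mul_le_mul_left _ ?_)
  apply Finset.card_le_card
  intro v hv
  have hv' : top v z = c := (mem_filter.mp hv).2
  refine mem_filter.mpr ⟨mem_univ _, z, hv', fun i' hi' => ?_⟩
  have hZ : i' ≠ z := by
    intro h; rw [h, hv'] at hi'; exact hd hi'.symm
  have : (i' : ℕ) ≠ 0 := by
    intro h0; exact hZ (Fin.ext (by simp [hz, h0]))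
  have hpos : 0 < (i' : ℕ) := Nat.pos_of_ne_zero this
  exact Fin.lt_def.mpr hpos

end Stmt18Aux



/-- Minimax upper bound for `ℓ`-truncated elections.  Voter `v`'s injective truncated
ballot is `top v : Fin ℓ → Fin m`; `v` truncated-prefers `c` to `c'` (`c ≻ᵗ_v c'`) if she
ranks `c` and either ranks `c'` lower or not at all.  `worst c = min_{c'≠c} |{v : c ≻ᵗ_v c'}|`
and `best c = min_{c'≠c} (n - |{v : c' ≻ᵗ_v c}|)` (stated via `IsLeast`).  If every
candidate has worst score at most `x`, then every candidate has best score at most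
`x·(m-ℓ)·(1 + ℓ²/(m² - ℓ² - m + ℓ))`; consequently the candidate with maximum worst score
approximates every candidate's best score within the factor
`1/((m-ℓ)·(1 + ℓ²/(m²-ℓ²-m+ℓ))) ≥ 1/(m - ℓ/2)`. -/
theorem stmt_18 (n m ℓ : ℕ) (hℓ : 1 ≤ ℓ) (hℓm : ℓ < m)
    (top : Fin n → Fin ℓ → Fin m) (hinj : ∀ v, Function.Injective (top v))
    (worst best : Fin m → ℝ)
    (hworst : ∀ c, IsLeast
      {y : ℝ | ∃ c' : Fin m, c' ≠ c ∧
        y = ((Finset.univ.filter (fun v : Fin n =>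
          ∃ i, top v i = c ∧ ∀ i', top v i' = c' → i < i')).card : ℝ)} (worst c))
    (hbest : ∀ c, IsLeast
      {y : ℝ | ∃ c' : Fin m, c' ≠ c ∧
        y = (n : ℝ) - ((Finset.univ.filter (fun v : Fin n =>
          ∃ i, top v i = c' ∧ ∀ i', top v i' = c → i < i')).card : ℝ)} (best c)) :
    (∀ x : ℝ, (∀ c, worst c ≤ x) →
      ∀ c, best c ≤ x * (((m : ℝ) - ℓ) * (1 + (ℓ : ℝ) ^ 2 / ((m : ℝ) ^ 2 - (ℓ : ℝ) ^ 2 - m + ℓ)))) ∧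
    (∀ a : Fin m, (∀ c, worst c ≤ worst a) →
      ∀ c, (1 / (((m : ℝ) - ℓ) * (1 + (ℓ : ℝ) ^ 2 / ((m : ℝ) ^ 2 - (ℓ : ℝ) ^ 2 - m + ℓ))))
          * best c ≤ worst a) ∧
    (1 / ((m : ℝ) - (ℓ : ℝ) / 2)
      ≤ 1 / (((m : ℝ) - ℓ) * (1 + (ℓ : ℝ) ^ 2 / ((m : ℝ) ^ 2 - (ℓ : ℝ) ^ 2 - m + ℓ)))) := by
  classical
  open Finset Stmt18Aux in
  -- basic cast facts
  have hml : (ℓ : ℝ) + 1 ≤ (m : ℝ) := by exact_mod_cast hℓm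
  have hl1 : (1 : ℝ) ≤ (ℓ : ℝ) := by exact_mod_cast hℓ
  have hden : (0 : ℝ) < (m : ℝ) + ℓ - 1 := by linarith
  have hmℓ : (0 : ℝ) < (m : ℝ) - ℓ := by linarith
  have hfact : (m : ℝ) ^ 2 - (ℓ : ℝ) ^ 2 - m + ℓ = ((m : ℝ) - ℓ) * ((m : ℝ) + ℓ - 1) := by
    ring
  have hGeq : (((m : ℝ) - ℓ) * (1 + (ℓ : ℝ) ^ 2 / ((m : ℝ) ^ 2 - (ℓ : ℝ) ^ 2 - m + ℓ)))
      = ((m : ℝ) ^ 2 - m + ℓ) / ((m : ℝ) + ℓ - 1) := by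
    rw [hfact]
    field_simp
    ring
  have hm0 : 0 < m := lt_of_le_of_lt (Nat.zero_le _) hℓm
  -- Part 1
  have P1 : ∀ x : ℝ, (∀ c, worst c ≤ x) →
      ∀ c, best c ≤ x * (((m : ℝ) - ℓ) * (1 + (ℓ : ℝ) ^ 2 / ((m : ℝ) ^ 2 - (ℓ : ℝ) ^ 2 - m + ℓ))) := by
    intro x hx c
    -- n ≤ m * x
    obtain ⟨c₀, hc₀⟩ := firstlemma top hℓ hm0
    have hn_le : (n : ℝ) ≤ m * x := by
      obtain ⟨d₀, hd₀, he₀⟩ := (hworst c₀).1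
      have h1 : (n : ℝ) ≤ (m : ℝ) * (N top c₀ d₀ : ℝ) := by exact_mod_cast hc₀ d₀ hd₀
      have h2 : worst c₀ = (N top c₀ d₀ : ℝ) := he₀
      have h3 := hx c₀
      nlinarith [Nat.cast_nonneg (α := ℝ) m]
    -- each n - N c' c is in the best set
    have hbound : ∀ c' : Fin m, c' ≠ c → best c ≤ (n : ℝ) - (N top c' c : ℝ) :=
      fun c' h => (hbest c).2 ⟨c', h, rfl⟩
    -- bound A
    have hA : ((m : ℝ) - 1) * best c ≤ ((m : ℝ) - 1) * n - (ℓ : ℝ) * (occ' top c : ℝ) := by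
      have h1 : (univ.erase c).card • best c
          ≤ ∑ c' ∈ univ.erase c, ((n : ℝ) - (N top c' c : ℝ)) :=
        Finset.card_nsmul_le_sum _ _ _ (fun c' hc' => hbound c' (Finset.mem_erase.mp hc').1)
      have hcarde : (univ.erase c).card = m - 1 := by
        rw [Finset.card_erase_of_mem (Finset.mem_univ c), Finset.card_univ, Fintype.card_fin]
      have h2 : ∑ c' ∈ univ.erase c, ((n : ℝ) - (N top c' c : ℝ))
          = ((univ.erase c).card : ℝ) * n - ∑ c' ∈ univ.erase c, (N top c' c : ℝ) := by
        rw [Finset.sum_sub_distrib, Finset.sum_const, nsmul_eq_mul]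
      have h3 : (ℓ : ℝ) * (occ' top c : ℝ) ≤ ∑ c' ∈ univ.erase c, (N top c' c : ℝ) := by
        have := sumA top hinj c
        push_cast [← Nat.cast_sum]
        exact_mod_cast this
      have hm1cast : ((m - 1 : ℕ) : ℝ) = (m : ℝ) - 1 := by
        rw [Nat.cast_sub hm0]; simp
      rw [hcarde] at h1
      rw [h2, hcarde, hm1cast] at h1
      rw [nsmul_eq_mul, hm1cast] at h1
      linarith
    -- bound B
    have hB : best c ≤ (occ' top c : ℝ) + x := by
      obtain ⟨d, hd, he⟩ := (hworst c).1
      have h1 : best c ≤ (n : ℝ) - (N top d c : ℝ) := hbound d hd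
      have h2 : (n : ℝ) ≤ (N top c d : ℝ) + (N top d c : ℝ) + (occ' top c : ℝ) := by
        exact_mod_cast split top hinj hd
      have h3 : worst c = (N top c d : ℝ) := he
      have h4 := hx c
      linarith
    -- combine
    have key : ((m : ℝ) + ℓ - 1) * best c ≤ x * ((m : ℝ) ^ 2 - m + ℓ) := by
      have t1 := mul_le_mul_of_nonneg_left hB (by linarith : (0 : ℝ) ≤ (ℓ : ℝ))
      have t2 := mul_le_mul_of_nonneg_left hn_le (by linarith : (0 : ℝ) ≤ (m : ℝ) - 1)
      nlinarith [hA, t1, t2]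
    rw [hGeq, ← mul_div_assoc, le_div_iff₀ hden]
    linarith
  refine ⟨P1, ?_, ?_⟩
  · -- Part 2
    intro a ha c
    have h := P1 (worst a) ha c
    have hGpos : (0 : ℝ) < ((m : ℝ) - ℓ) * (1 + (ℓ : ℝ) ^ 2 / ((m : ℝ) ^ 2 - (ℓ : ℝ) ^ 2 - m + ℓ)) := by
      rw [hGeq]
      apply div_pos
      · nlinarith
      · exact hden
    set G := ((m : ℝ) - ℓ) * (1 + (ℓ : ℝ) ^ 2 / ((m : ℝ) ^ 2 - (ℓ : ℝ) ^ 2 - m + ℓ)) with hG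
    have h2 := mul_le_mul_of_nonneg_left h (le_of_lt (one_div_pos.mpr hGpos))
    have h3 : (1 / G) * (worst a * G) = worst a := by
      field_simp
    linarith
  · -- Part 3
    rw [hGeq]
    rw [one_div_div]
    have hnum : (0 : ℝ) < (m : ℝ) ^ 2 - m + ℓ := by nlinarith
    rw [div_le_div_iff₀ (by linarith : (0 : ℝ) < (m : ℝ) - (ℓ : ℝ) / 2) hnum]
    nlinarith [mul_nonneg (by linarith : (0 : ℝ) ≤ (ℓ : ℝ)) (by linarith : (0 : ℝ) ≤ (m : ℝ) - ℓ - 1)]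
end
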